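/- arXiv:2110.00514 — 2 statements merged into one kernel-verified Lean document; each statement's English description precedes it below -/
import Mathlib

section
/- (Element-eigenvalue inequality of Fried.) Let ι be a finite index set and n a positive integer. For each E ∈ ι let K_E and M_E be real symmetric positive semidefinite n×n matrices and let λ_E ≥ 0 satisfy K_E ≼ λ_E M_E in the Loewner order. Set K = Σ_E K_E and M = Σ_E M_E, and assume M is positive definite. Then every generalized eigenvalue λ of the pencil (K, M), i.e. every λ ∈ ℝ for which there exists d ≠ 0 with K d = λ M d, satisfies λ ≤ max_{E∈ι} λ_E. -/
/-!
Test the eigen-equation `K d = λ M d` against `d`: then `λ · dᵀMd = dᵀKd = Σ_E dᵀK_E d`, and each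
element term is at most `λ_E · dᵀM_E d ≤ (max λ_E) · dᵀM_E d`, because `dᵀM_E d ≥ 0`. Summing gives
`λ · dᵀMd ≤ (max λ_E) · dᵀMd`, and `dᵀMd > 0` lets us cancel.
-/

open Matrix

section OrderedRing

variable {m ι R : Type*} [Fintype m] [CommRing R] [PartialOrder R] [IsOrderedRing R]

lemma dotProduct_mulVec_le_mul_of_nonneg_sub {A B : Matrix m m R} {c : R} {x : m → R}
    (h : 0 ≤ x ⬝ᵥ ((c • B - A) *ᵥ x)) : x ⬝ᵥ (A *ᵥ x) ≤ c * x ⬝ᵥ (B *ᵥ x) := by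
  rw [sub_mulVec, dotProduct_sub, smul_mulVec, dotProduct_smul, smul_eq_mul] at h
  exact sub_nonneg.mp h

lemma dotProduct_sum_mulVec_le_mul {s : Finset ι} {A B : ι → Matrix m m R} {c : ι → R} {L : R}
    {x : m → R} (hAB : ∀ i ∈ s, 0 ≤ x ⬝ᵥ ((c i • B i - A i) *ᵥ x))
    (hB : ∀ i ∈ s, 0 ≤ x ⬝ᵥ (B i *ᵥ x)) (hc : ∀ i ∈ s, c i ≤ L) :
    x ⬝ᵥ ((∑ i ∈ s, A i) *ᵥ x) ≤ L * x ⬝ᵥ ((∑ i ∈ s, B i) *ᵥ x) := by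
  rw [sum_mulVec, sum_mulVec, dotProduct_sum, dotProduct_sum, Finset.mul_sum]
  refine Finset.sum_le_sum fun i hi => ?_
  calc x ⬝ᵥ (A i *ᵥ x) ≤ c i * x ⬝ᵥ (B i *ᵥ x) := dotProduct_mulVec_le_mul_of_nonneg_sub (hAB i hi)
    _ ≤ L * x ⬝ᵥ (B i *ᵥ x) := mul_le_mul_of_nonneg_right (hc i hi) (hB i hi)

end OrderedRing

lemma le_of_mulVec_eq_smul_mulVec {m R : Type*} [Fintype m] [CommRing R] [LinearOrder R]
    [IsStrictOrderedRing R] {K M : Matrix m m R} {μ L : R} {d : m → R}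
    (heig : K *ᵥ d = μ • M *ᵥ d) (hM : 0 < d ⬝ᵥ (M *ᵥ d))
    (hK : d ⬝ᵥ (K *ᵥ d) ≤ L * d ⬝ᵥ (M *ᵥ d)) : μ ≤ L := by
  rw [heig, dotProduct_smul, smul_eq_mul] at hK
  exact le_of_mul_le_mul_right hK hM

theorem stmt_2_general {ι : Type*} [Fintype ι] {n : ℕ}
    (Kel Mel : ι → Matrix (Fin n) (Fin n) ℝ) (lam : ι → ℝ)
    (hMpsd : ∀ E, (Mel E).PosSemidef)
    (hle : ∀ E, ∀ x : Fin n → ℝ,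
      0 ≤ dotProduct x ((lam E • Mel E - Kel E).mulVec x))
    (K M : Matrix (Fin n) (Fin n) ℝ)
    (hK : K = ∑ E, Kel E) (hM : M = ∑ E, Mel E)
    (hMpd : M.PosDef)
    (lam₀ : ℝ) (d : Fin n → ℝ) (hd : d ≠ 0)
    (heig : K.mulVec d = lam₀ • M.mulVec d) :
    lam₀ ≤ ⨆ E, lam E := by
  have hMd : 0 < d ⬝ᵥ (M *ᵥ d) := by simpa using hMpd.dotProduct_mulVec_pos hd
  refine le_of_mulVec_eq_smul_mulVec heig hMd ?_
  rw [hK, hM]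
  exact dotProduct_sum_mulVec_le_mul (fun E _ => hle E d)
    (fun E _ => by simpa using (hMpsd E).dotProduct_mulVec_nonneg d)
    (fun E _ => Finite.le_ciSup lam E)

/-- Element-eigenvalue inequality of Fried: if each element pair satisfies
`K_E ≼ lam_E • M_E` with `K_E, M_E` symmetric PSD, and the assembled global mass matrix
`M = ∑ M_E` is positive definite, then every generalized eigenvalue of the assembled
pencil `(∑ K_E, ∑ M_E)` is at most `max_E lam_E`. -/
theorem stmt_2 {ι : Type*} [Fintype ι] [Nonempty ι] {n : ℕ} (hn : 0 < n)
    (Kel Mel : ι → Matrix (Fin n) (Fin n) ℝ) (lam : ι → ℝ)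
    (hKsymm : ∀ E, (Kel E).IsSymm) (hMsymm : ∀ E, (Mel E).IsSymm)
    (hKpsd : ∀ E, (Kel E).PosSemidef) (hMpsd : ∀ E, (Mel E).PosSemidef)
    (hlam : ∀ E, 0 ≤ lam E)
    (hle : ∀ E, ∀ x : Fin n → ℝ,
      0 ≤ dotProduct x ((lam E • Mel E - Kel E).mulVec x))
    (K M : Matrix (Fin n) (Fin n) ℝ)
    (hK : K = ∑ E, Kel E) (hM : M = ∑ E, Mel E)
    (hMpd : M.PosDef)
    (lam₀ : ℝ) (d : Fin n → ℝ) (hd : d ≠ 0)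
    (heig : K.mulVec d = lam₀ • M.mulVec d) :
    lam₀ ≤ ⨆ E, lam E :=
  stmt_2_general Kel Mel lam hMpsd hle K M hK hM hMpd lam₀ d hd heig
end

section
/- Let ι be a finite nonempty index set and for each E ∈ ι let K_E, M_E be real symmetric positive semidefinite n×n matrices with λ_E ≥ 0 satisfying K_E ≼ λ_E M_E, let K = Σ_E K_E and M = Σ_E M_E with M positive definite, and set ω* = √(max_E λ_E). If λ > 0 is a generalized eigenvalue of (K, M) with associated frequency ω = √λ, then ω ≤ ω* and hence the conservative time step estimate satisfies 2/ω* ≤ 2/ω. In particular 2/ω* is a lower bound for the CFL-critical time step 2/ω_max, where ω_max is the square root of the largest generalized eigenvalue of (K, M). -/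
/-!
Summing the element bounds `xᵀ K_E x ≤ λ_E xᵀ M_E x` and using `M_E ≽ 0` gives
`xᵀ K x ≤ (max_E λ_E) xᵀ M x`. For an eigenvector `d`, `dᵀ K d = λ dᵀ M d` with `dᵀ M d > 0`,
so every generalized eigenvalue is at most `max_E λ_E`; the time-step bounds then follow from
monotonicity of `√` and antitonicity of `2 / ·` on positive reals.
-/

open Matrix

section QuadraticForm

variable {n : Type*} [Fintype n]

lemma dotProduct_mulVec_le_of_nonneg_sub {A B : Matrix n n ℝ} {c : ℝ} {x : n → ℝ}
    (h : 0 ≤ x ⬝ᵥ ((c • B - A) *ᵥ x)) : x ⬝ᵥ (A *ᵥ x) ≤ c * x ⬝ᵥ (B *ᵥ x) := by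
  rw [sub_mulVec, smul_mulVec, dotProduct_sub, dotProduct_smul, smul_eq_mul] at h
  linarith

lemma dotProduct_sum_mulVec_le_iSup_mul {ι : Type*} [Fintype ι]
    (A B : ι → Matrix n n ℝ) (c : ι → ℝ) (hB : ∀ E, (B E).PosSemidef)
    (hle : ∀ E, ∀ x : n → ℝ, 0 ≤ x ⬝ᵥ ((c E • B E - A E) *ᵥ x)) (x : n → ℝ) :
    x ⬝ᵥ ((∑ E, A E) *ᵥ x) ≤ (⨆ E, c E) * x ⬝ᵥ ((∑ E, B E) *ᵥ x) := by
  simp only [sum_mulVec, dotProduct_sum, Finset.mul_sum]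
  refine Finset.sum_le_sum fun E _ => ?_
  calc x ⬝ᵥ (A E *ᵥ x) ≤ c E * x ⬝ᵥ (B E *ᵥ x) := dotProduct_mulVec_le_of_nonneg_sub (hle E x)
    _ ≤ (⨆ E, c E) * x ⬝ᵥ (B E *ᵥ x) :=
      mul_le_mul_of_nonneg_right (le_ciSup (Set.finite_range c).bddAbove E)
        ((hB E).dotProduct_mulVec_nonneg x)

lemma le_of_mulVec_eq_smul_mulVec_s4 {K M : Matrix n n ℝ} (hM : M.PosDef) {L μ : ℝ}
    (hKM : ∀ x : n → ℝ, x ⬝ᵥ (K *ᵥ x) ≤ L * x ⬝ᵥ (M *ᵥ x))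
    {d : n → ℝ} (hd : d ≠ 0) (heig : K *ᵥ d = μ • M *ᵥ d) : μ ≤ L := by
  have hbound := hKM d
  rw [heig, dotProduct_smul, smul_eq_mul] at hbound
  exact le_of_mul_le_mul_right hbound (hM.dotProduct_mulVec_pos hd)

end QuadraticForm

lemma div_sqrt_le_div_sqrt {a b c : ℝ} (hc : 0 ≤ c) (ha : 0 < a) (hab : a ≤ b) :
    c / √b ≤ c / √a :=
  div_le_div_of_nonneg_left hc (Real.sqrt_pos.mpr ha) (Real.sqrt_le_sqrt hab)

theorem stmt_4_general {ι : Type*} [Fintype ι] {n : ℕ}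
    (Kel Mel : ι → Matrix (Fin n) (Fin n) ℝ) (lamE : ι → ℝ)
    (hMpsd : ∀ E, (Mel E).PosSemidef)
    (hle : ∀ E, ∀ x : Fin n → ℝ,
      0 ≤ dotProduct x ((lamE E • Mel E - Kel E).mulVec x))
    (K M : Matrix (Fin n) (Fin n) ℝ)
    (hK : K = ∑ E, Kel E) (hM : M = ∑ E, Mel E)
    (hMpd : M.PosDef)
    (ωstar : ℝ) (hωstar : ωstar = Real.sqrt (⨆ E, lamE E))
    (lam : ℝ) (hlampos : 0 < lam)
    (d : Fin n → ℝ) (hd : d ≠ 0)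
    (heig : K.mulVec d = lam • M.mulVec d)
    (ω : ℝ) (hω : ω = Real.sqrt lam) :
    ω ≤ ωstar ∧ 2 / ωstar ≤ 2 / ω ∧
      ∀ lamMax : ℝ,
        (∃ d₀ : Fin n → ℝ, d₀ ≠ 0 ∧ K.mulVec d₀ = lamMax • M.mulVec d₀) →
        (∀ μ : ℝ, (∃ d₁ : Fin n → ℝ, d₁ ≠ 0 ∧ K.mulVec d₁ = μ • M.mulVec d₁) →
          μ ≤ lamMax) →
        2 / ωstar ≤ 2 / Real.sqrt lamMax := by
  have hKM : ∀ x, x ⬝ᵥ (K *ᵥ x) ≤ (⨆ E, lamE E) * x ⬝ᵥ (M *ᵥ x) := by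
    subst hK hM
    exact dotProduct_sum_mulVec_le_iSup_mul Kel Mel lamE hMpsd hle
  have hlam : lam ≤ ⨆ E, lamE E := le_of_mulVec_eq_smul_mulVec_s4 hMpd hKM hd heig
  subst hω hωstar
  refine ⟨Real.sqrt_le_sqrt hlam, div_sqrt_le_div_sqrt zero_le_two hlampos hlam, ?_⟩
  rintro lamMax ⟨d₀, hd₀, heig₀⟩ hmax
  have hlamMax : lamMax ≤ ⨆ E, lamE E := le_of_mulVec_eq_smul_mulVec_s4 hMpd hKM hd₀ heig₀
  exact div_sqrt_le_div_sqrt zero_le_two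
    (hlampos.trans_le (hmax lam ⟨d, hd, heig⟩)) hlamMax

/-- Conservative critical time step estimate: with the element-wise Loewner bounds
`K_E ≼ lam_E • M_E` and `ω* = √(max_E lam_E)`, any positive generalized eigenvalue
`lam` of the assembled pencil with frequency `ω = √lam` satisfies `ω ≤ ω*` and
`2/ω* ≤ 2/ω`; in particular `2/ω*` is a lower bound for the CFL-critical time step
`2/ω_max`, where `ω_max` is the square root of the largest generalized eigenvalue. -/
theorem stmt_4 {ι : Type*} [Fintype ι] [Nonempty ι] {n : ℕ} (hn : 0 < n)
    (Kel Mel : ι → Matrix (Fin n) (Fin n) ℝ) (lamE : ι → ℝ)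
    (hKsymm : ∀ E, (Kel E).IsSymm) (hMsymm : ∀ E, (Mel E).IsSymm)
    (hKpsd : ∀ E, (Kel E).PosSemidef) (hMpsd : ∀ E, (Mel E).PosSemidef)
    (hlamE : ∀ E, 0 ≤ lamE E)
    (hle : ∀ E, ∀ x : Fin n → ℝ,
      0 ≤ dotProduct x ((lamE E • Mel E - Kel E).mulVec x))
    (K M : Matrix (Fin n) (Fin n) ℝ)
    (hK : K = ∑ E, Kel E) (hM : M = ∑ E, Mel E)
    (hMpd : M.PosDef)
    (ωstar : ℝ) (hωstar : ωstar = Real.sqrt (⨆ E, lamE E))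
    (lam : ℝ) (hlampos : 0 < lam)
    (d : Fin n → ℝ) (hd : d ≠ 0)
    (heig : K.mulVec d = lam • M.mulVec d)
    (ω : ℝ) (hω : ω = Real.sqrt lam) :
    ω ≤ ωstar ∧ 2 / ωstar ≤ 2 / ω ∧
      ∀ lamMax : ℝ,
        (∃ d₀ : Fin n → ℝ, d₀ ≠ 0 ∧ K.mulVec d₀ = lamMax • M.mulVec d₀) →
        (∀ μ : ℝ, (∃ d₁ : Fin n → ℝ, d₁ ≠ 0 ∧ K.mulVec d₁ = μ • M.mulVec d₁) →
          μ ≤ lamMax) →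
        2 / ωstar ≤ 2 / Real.sqrt lamMax :=
  stmt_4_general Kel Mel lamE hMpsd hle K M hK hM hMpd ωstar hωstar lam hlampos d hd heig ω hω
end
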